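/- arXiv:2412.09114 — 2 statements merged into one kernel-verified Lean document; each statement's English description precedes it below -/
import Mathlib

section
/- Proposition 1 (ISS estimation error dynamics), rendered as an explicit ultimate bound: let P ∈ ℝ^{n×n} with P ≻ 0, R, Q ∈ ℝ^{n×m}, and ε > 0 satisfy X + ε I_n ⪯ 0, where X := A_aᵀ P + A_aᵀ C_aᵀ Rᵀ − C_aᵀ Qᵀ + P A_a + R C_a A_a − Q C_a. Set E := P⁻¹ R, K := P⁻¹ Q, M := I_n + E C_a, N := M A_a − K C_a, and let B̄_a ∈ ℝ^{n×(d+2m)} be the block matrix [−M D_a, K, −E]. Then for every θ ∈ (0,1), every c ≥ 0, every function w : ℝ → ℝ^{d+2m} with ‖w(t)‖ ≤ c for all t ≥ 0, and every differentiable e : ℝ → ℝ^n satisfying e′(t) = N e(t) + B̄_a w(t) for all t ≥ 0, one has for all t ≥ 0: λ_min(P) ‖e(t)‖² ≤ max( λ_max(P) ‖e(0)‖², λ_max(P) (2 ‖P B̄_a‖ c / (θ ε))² ), where λ_min(P) and λ_max(P) are the smallest and largest eigenvalues of P. In particular the error dynamics is input-to-state stable with linear ISS-gain proportional to 2 ‖P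 [ (I+E C_a) D_a, −K, E ]‖ / (θ ε). -/
open Matrix
open scoped RealInnerProductSpace

/-- The ℓ2 (spectral) operator norm of a real matrix. -/
noncomputable def l2OpNorm {p q : Type*} [Fintype p] [Fintype q] [DecidableEq q]
    (A : Matrix p q ℝ) : ℝ :=
  ‖LinearMap.toContinuousLinearMap (Matrix.toEuclideanLin A)‖

section Aux

variable {n : ℕ}

lemma euclid_apply_eig (A : Matrix (Fin n) (Fin n) ℝ) (hA : A.IsHermitian) (i : Fin n) :
    toEuclideanLin A (hA.eigenvectorBasis i) = hA.eigenvalues i • hA.eigenvectorBasis i := by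
  ext j
  exact congrFun (hA.mulVec_eigenvectorBasis i) j

lemma inner_toEuclideanLin_self_eq (A : Matrix (Fin n) (Fin n) ℝ) (hA : A.IsHermitian)
    (x : EuclideanSpace ℝ (Fin n)) :
    ⟪x, toEuclideanLin A x⟫ = ∑ i, hA.eigenvalues i * ⟪x, hA.eigenvectorBasis i⟫ ^ 2 := by
  have hsym : (toEuclideanLin A).IsSymmetric := isHermitian_iff_isSymmetric.1 hA
  rw [← (hA.eigenvectorBasis).sum_inner_mul_inner x (toEuclideanLin A x)]
  refine Finset.sum_congr rfl fun i _ => ?_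
  have : ⟪hA.eigenvectorBasis i, toEuclideanLin A x⟫
      = hA.eigenvalues i * ⟪x, hA.eigenvectorBasis i⟫ := by
    rw [← hsym (hA.eigenvectorBasis i) x, euclid_apply_eig A hA i, real_inner_smul_left,
      real_inner_comm]
  rw [this]; ring

lemma norm_sq_eq_sum_inner (b : OrthonormalBasis (Fin n) ℝ (EuclideanSpace ℝ (Fin n)))
    (x : EuclideanSpace ℝ (Fin n)) :
    ‖x‖ ^ 2 = ∑ i, ⟪x, b i⟫ ^ 2 := by
  rw [← real_inner_self_eq_norm_sq, ← b.sum_inner_mul_inner x x]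
  refine Finset.sum_congr rfl fun i _ => ?_
  rw [real_inner_comm x (b i)]; ring

lemma inner_le_iSup_eig (A : Matrix (Fin n) (Fin n) ℝ) (hA : A.IsHermitian)
    (x : EuclideanSpace ℝ (Fin n)) :
    ⟪x, toEuclideanLin A x⟫ ≤ (⨆ i, hA.eigenvalues i) * ‖x‖ ^ 2 := by
  rw [inner_toEuclideanLin_self_eq A hA x, norm_sq_eq_sum_inner hA.eigenvectorBasis x,
    Finset.mul_sum]
  refine Finset.sum_le_sum fun i _ => ?_
  exact mul_le_mul_of_nonneg_right (le_ciSup (Set.Finite.bddAbove (Set.finite_range _)) i)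
    (sq_nonneg _)

lemma iInf_eig_le_inner (A : Matrix (Fin n) (Fin n) ℝ) (hA : A.IsHermitian)
    (x : EuclideanSpace ℝ (Fin n)) :
    (⨅ i, hA.eigenvalues i) * ‖x‖ ^ 2 ≤ ⟪x, toEuclideanLin A x⟫ := by
  rw [inner_toEuclideanLin_self_eq A hA x, norm_sq_eq_sum_inner hA.eigenvectorBasis x,
    Finset.mul_sum]
  refine Finset.sum_le_sum fun i _ => ?_
  exact mul_le_mul_of_nonneg_right (ciInf_le (Set.Finite.bddBelow (Set.finite_range _)) i)
    (sq_nonneg _)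

lemma euclid_mul_apply {p q r : Type*} [Fintype p] [Fintype q] [Fintype r] [DecidableEq q]
    [DecidableEq r] (A : Matrix p q ℝ) (B : Matrix q r ℝ) (x : EuclideanSpace ℝ r) :
    toEuclideanLin (A * B) x = toEuclideanLin A (toEuclideanLin B x) := by
  ext j
  simp [Matrix.toEuclideanLin_apply]

lemma inner_transpose_left (A : Matrix (Fin n) (Fin n) ℝ) (x y : EuclideanSpace ℝ (Fin n)) :
    ⟪x, toEuclideanLin Aᵀ y⟫ = ⟪toEuclideanLin A x, y⟫ := by
  rw [← conjTranspose_eq_transpose_of_trivial, Matrix.toEuclideanLin_conjTranspose_eq_adjoint,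
    LinearMap.adjoint_inner_right]

lemma euclid_smul_one (ε : ℝ) (x : EuclideanSpace ℝ (Fin n)) :
    toEuclideanLin (ε • (1 : Matrix (Fin n) (Fin n) ℝ)) x = ε • x := by
  ext j
  simp [Matrix.toEuclideanLin_apply, Matrix.smul_mulVec, Matrix.one_mulVec]

lemma l2OpNorm_nonneg {p q : Type*} [Fintype p] [Fintype q] [DecidableEq q]
    (A : Matrix p q ℝ) : 0 ≤ l2OpNorm A := norm_nonneg _

lemma l2OpNorm_bound {p q : Type*} [Fintype p] [Fintype q] [DecidableEq q]
    (A : Matrix p q ℝ) (x : EuclideanSpace ℝ q) :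
    ‖toEuclideanLin A x‖ ≤ l2OpNorm A * ‖x‖ :=
  (LinearMap.toContinuousLinearMap (Matrix.toEuclideanLin A)).le_opNorm x

end Aux

set_option maxHeartbeats 2000000 in
/-- Proposition 1 (ISS estimation error dynamics), rendered as an explicit ultimate bound. -/
theorem stmt3 {n m d : ℕ}
    (Aa : Matrix (Fin n) (Fin n) ℝ) (Ca : Matrix (Fin m) (Fin n) ℝ)
    (Da : Matrix (Fin n) (Fin d) ℝ)
    (P : Matrix (Fin n) (Fin n) ℝ) (hP : P.PosDef)
    (R Q : Matrix (Fin n) (Fin m) ℝ) (ε : ℝ) (hε : 0 < ε)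
    (X : Matrix (Fin n) (Fin n) ℝ)
    (hX : X = Aaᵀ * P + Aaᵀ * Caᵀ * Rᵀ - Caᵀ * Qᵀ + P * Aa + R * Ca * Aa - Q * Ca)
    (hXneg : ∀ x : EuclideanSpace ℝ (Fin n),
      (⟪x, toEuclideanLin (X + ε • (1 : Matrix (Fin n) (Fin n) ℝ)) x⟫ : ℝ) ≤ 0)
    (E K : Matrix (Fin n) (Fin m) ℝ) (M N : Matrix (Fin n) (Fin n) ℝ)
    (hE : E = P⁻¹ * R) (hK : K = P⁻¹ * Q)
    (hM : M = 1 + E * Ca) (hN : N = M * Aa - K * Ca)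
    (Ba : Matrix (Fin n) (Fin d ⊕ (Fin m ⊕ Fin m)) ℝ)
    (hBa : Ba = fromCols (-(M * Da)) (fromCols K (-E))) :
    ∀ θ : ℝ, 0 < θ → θ < 1 → ∀ c : ℝ, 0 ≤ c →
    ∀ w : ℝ → EuclideanSpace ℝ (Fin d ⊕ (Fin m ⊕ Fin m)),
      (∀ t : ℝ, 0 ≤ t → ‖w t‖ ≤ c) →
    ∀ e : ℝ → EuclideanSpace ℝ (Fin n), Differentiable ℝ e →
      (∀ t : ℝ, 0 ≤ t →
        HasDerivAt e (toEuclideanLin N (e t) + toEuclideanLin Ba (w t)) t) →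
    ∀ t : ℝ, 0 ≤ t →
      (⨅ i, hP.1.eigenvalues i) * ‖e t‖ ^ 2 ≤
        max ((⨆ i, hP.1.eigenvalues i) * ‖e 0‖ ^ 2)
            ((⨆ i, hP.1.eigenvalues i) * (2 * l2OpNorm (P * Ba) * c / (θ * ε)) ^ 2) := by
  intro θ hθ0 hθ1 c hc w hw e he he' t ht
  cases isEmpty_or_nonempty (Fin n) with
  | inl hempty =>
      simp [Real.iInf_of_isEmpty, Real.iSup_of_isEmpty]
  | inr hne =>
  -- matrix algebra facts
  have hPt : Pᵀ = P := by
    rw [← conjTranspose_eq_transpose_of_trivial]; exact hP.1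
  have hdet : IsUnit P.det := isUnit_iff_ne_zero.2 hP.det_pos.ne'
  have hPinv : P * P⁻¹ = 1 := Matrix.mul_nonsing_inv P hdet
  have hPE : P * E = R := by rw [hE, ← Matrix.mul_assoc, hPinv, Matrix.one_mul]
  have hPK : P * K = Q := by rw [hK, ← Matrix.mul_assoc, hPinv, Matrix.one_mul]
  have hPM : P * M = P + R * Ca := by
    rw [hM, Matrix.mul_add, Matrix.mul_one, ← Matrix.mul_assoc, hPE]
  have hPN : P * N = P * Aa + R * Ca * Aa - Q * Ca := by
    rw [hN, Matrix.mul_sub, ← Matrix.mul_assoc, hPM, ← Matrix.mul_assoc, hPK, Matrix.add_mul]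
  have hXPN : X = (P * N)ᵀ + P * N := by
    rw [hX, hPN]
    simp only [transpose_add, transpose_sub, transpose_mul, hPt, Matrix.mul_assoc]
    abel
  -- quadratic form bound from hXneg
  have hXle : ∀ x : EuclideanSpace ℝ (Fin n),
      ⟪x, toEuclideanLin X x⟫ ≤ -(ε * ‖x‖ ^ 2) := by
    intro x
    have h := hXneg x
    rw [map_add, LinearMap.add_apply, inner_add_right, euclid_smul_one,
      real_inner_smul_right, real_inner_self_eq_norm_sq] at h
    linarith
  -- eigenvalue abbreviations
  set lmin := ⨅ i, hP.1.eigenvalues i with hlmin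
  set lmax := ⨆ i, hP.1.eigenvalues i with hlmax
  have hlmax_pos : 0 < lmax := by
    obtain ⟨i⟩ := hne
    exact lt_of_lt_of_le (hP.eigenvalues_pos i)
      (le_ciSup (Set.Finite.bddAbove (Set.finite_range _)) i)
  set ρ := 2 * l2OpNorm (P * Ba) * c / (θ * ε) with hρ
  have hθε : 0 < θ * ε := mul_pos hθ0 hε
  have hρ0 : 0 ≤ ρ := div_nonneg
    (mul_nonneg (mul_nonneg (by norm_num) (l2OpNorm_nonneg _)) hc) hθε.le
  have hnum : 2 * l2OpNorm (P * Ba) * c = θ * ε * ρ := by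
    rw [hρ]; field_simp
  -- the Lyapunov function and its derivative
  set ed : ℝ → EuclideanSpace ℝ (Fin n) :=
    fun s => toEuclideanLin N (e s) + toEuclideanLin Ba (w s) with hed
  set V : ℝ → ℝ := fun s => ⟪e s, toEuclideanLin P (e s)⟫ with hV
  set Vd : ℝ → ℝ :=
    fun s => ⟪e s, toEuclideanLin P (ed s)⟫ + ⟪ed s, toEuclideanLin P (e s)⟫ with hVd
  set Pc := LinearMap.toContinuousLinearMap (Matrix.toEuclideanLin P) with hPc
  have hPcapp : ∀ x, Pc x = toEuclideanLin P x := fun x => rfl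
  have hVcont : Continuous V := by
    have h1 : Continuous fun s => toEuclideanLin P (e s) := Pc.continuous.comp he.continuous
    exact he.continuous.inner h1
  have hVderiv : ∀ x : ℝ, 0 ≤ x → HasDerivAt V (Vd x) x := by
    intro x hx
    have h2 : HasDerivAt (fun s => toEuclideanLin P (e s)) (toEuclideanLin P (ed x)) x :=
      Pc.hasFDerivAt.comp_hasDerivAt x (he' x hx)
    exact HasDerivAt.inner ℝ (he' x hx) h2
  have hsymP : (toEuclideanLin P).IsSymmetric := isHermitian_iff_isSymmetric.1 hP.1
  -- the key derivative bound
  have hbound : ∀ x : ℝ, 0 ≤ x → ρ < ‖e x‖ → Vd x < 0 := by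
    intro x hx hρx
    have hs0 : 0 < ‖e x‖ := lt_of_le_of_lt hρ0 hρx
    have hswap : ⟪ed x, toEuclideanLin P (e x)⟫ = ⟪e x, toEuclideanLin P (ed x)⟫ := by
      rw [← hsymP (ed x) (e x), real_inner_comm]
    have hsplit : ⟪e x, toEuclideanLin P (ed x)⟫
        = ⟪e x, toEuclideanLin (P * N) (e x)⟫ + ⟪e x, toEuclideanLin (P * Ba) (w x)⟫ := by
      rw [hed]
      simp only [map_add, inner_add_right, euclid_mul_apply]
    have hXsum : 2 * ⟪e x, toEuclideanLin (P * N) (e x)⟫ = ⟪e x, toEuclideanLin X (e x)⟫ := by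
      rw [hXPN, map_add, LinearMap.add_apply, inner_add_right, inner_transpose_left,
        real_inner_comm]
      ring
    have hI1 : 2 * ⟪e x, toEuclideanLin (P * N) (e x)⟫ ≤ -(ε * ‖e x‖ ^ 2) := by
      rw [hXsum]; exact hXle (e x)
    have hI2 : ⟪e x, toEuclideanLin (P * Ba) (w x)⟫ ≤ ‖e x‖ * (l2OpNorm (P * Ba) * c) := by
      calc ⟪e x, toEuclideanLin (P * Ba) (w x)⟫
          ≤ ‖e x‖ * ‖toEuclideanLin (P * Ba) (w x)‖ := real_inner_le_norm _ _
        _ ≤ ‖e x‖ * (l2OpNorm (P * Ba) * ‖w x‖) :=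
            mul_le_mul_of_nonneg_left (l2OpNorm_bound _ _) (norm_nonneg _)
        _ ≤ ‖e x‖ * (l2OpNorm (P * Ba) * c) :=
            mul_le_mul_of_nonneg_left
              (mul_le_mul_of_nonneg_left (hw x hx) (l2OpNorm_nonneg _)) (norm_nonneg _)
    have h2c : 2 * (‖e x‖ * (l2OpNorm (P * Ba) * c)) = θ * ε * ρ * ‖e x‖ := by
      have h' : 2 * (‖e x‖ * (l2OpNorm (P * Ba) * c))
          = 2 * l2OpNorm (P * Ba) * c * ‖e x‖ := by ring
      rw [h', hnum]
    have hkey : Vd x ≤ -(ε * ‖e x‖ ^ 2) + θ * ε * ρ * ‖e x‖ := by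
      show ⟪e x, toEuclideanLin P (ed x)⟫ + ⟪ed x, toEuclideanLin P (e x)⟫
          ≤ -(ε * ‖e x‖ ^ 2) + θ * ε * ρ * ‖e x‖
      rw [hswap, hsplit]
      linarith
    have hmul : θ * ε * ρ * ‖e x‖ < θ * ε * ‖e x‖ * ‖e x‖ := by
      have := mul_lt_mul_of_pos_left hρx (mul_pos hθε hs0)
      nlinarith
    nlinarith [sq_nonneg (‖e x‖), mul_pos (mul_pos hε hs0) hs0]
  -- the fencing bound
  set B := max (V 0) (lmax * ρ ^ 2) with hB
  have hVle : V t ≤ B := by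
    have key : ∀ δ : ℝ, 0 < δ → V t ≤ B + δ := by
      intro δ hδ
      have hbd : ∀ x ∈ Set.Ico 0 t, V x = B + δ → Vd x < 0 := by
        intro x hx hVx
        have hup : lmax * ‖e x‖ ^ 2 ≥ B + δ := by
          rw [← hVx]
          exact inner_le_iSup_eig P hP.1 (e x)
        have h2 : lmax * ρ ^ 2 < lmax * ‖e x‖ ^ 2 := by
          have hBle : lmax * ρ ^ 2 ≤ B := le_max_right _ _
          linarith
        have h3 : ρ < ‖e x‖ :=
          lt_of_pow_lt_pow_left₀ 2 (norm_nonneg _) ((mul_lt_mul_iff_right₀ hlmax_pos).1 h2)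
        exact hbound x hx.1 h3
      have happ := image_le_of_liminf_slope_right_lt_deriv_boundary
        (f := V) (f' := Vd) (a := 0) (b := t) (B := fun _ => B + δ) (B' := fun _ => 0)
        hVcont.continuousOn
        (fun x hx r hr =>
          ((hVderiv x hx.1).hasDerivWithinAt).liminf_right_slope_le hr)
        (le_add_of_le_of_nonneg (le_max_left _ _) hδ.le)
        (fun _ => hasDerivAt_const _ _)
        hbd
      exact happ (Set.right_mem_Icc.2 ht)
    exact le_of_forall_pos_le_add key
  calc lmin * ‖e t‖ ^ 2 ≤ V t := iInf_eig_le_inner P hP.1 (e t)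
    _ ≤ B := hVle
    _ ≤ max (lmax * ‖e 0‖ ^ 2) (lmax * ρ ^ 2) :=
        max_le_max (inner_le_iSup_eig P hP.1 (e 0)) le_rfl
end

section
/- Proposition 2 (Finite H∞-norm), stated in the frequency domain: let P ∈ ℝ^{n×n} with P ≻ 0, R, Q ∈ ℝ^{n×m}, and λ̄ > 0 be such that the symmetric block matrix [[X, −(P + R C_a) D_a, C̄_aᵀ], [−D_aᵀ (P + R C_a)ᵀ, −λ̄ I_d, 0], [C̄_a, 0, −λ̄ I_p]] is negative definite, where X := A_aᵀ P + A_aᵀ C_aᵀ Rᵀ − C_aᵀ Qᵀ + P A_a + R C_a A_a − Q C_a. Set E := P⁻¹ R, K := P⁻¹ Q, M := I_n + E C_a, and N := M A_a − K C_a. Then for every μ ∈ ℝ the complex matrix iμ I_n − N (entries of N coerced from ℝ to ℂ) is invertible, and the ℓ2 operator norm of the complex p×d matrix C̄_a (iμ I_n − N)⁻¹ M D_a is strictly less than λ̄; i.e., the H∞-norm of the transfer matrix T_{e_d ω_a}(s) = −C̄_a (s I − N)⁻¹ M D_a from the disturbance ω_a to the performance output e_d = C̄_a e satisfies ‖T_{e_d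 ω_a}‖_∞ < λ̄. -/
open Matrix

/-- The ℓ2 (spectral) operator norm of a complex matrix, i.e. its largest singular value. -/
noncomputable def l2OpNormC {p q : Type*} [Fintype p] [Fintype q] [DecidableEq q]
    (A : Matrix p q ℂ) : ℝ :=
  ‖LinearMap.toContinuousLinearMap (Matrix.toEuclideanLin A)‖

/-- A real matrix is negative definite (as a quadratic form) when `⟨x, S x⟩ < 0`
for all nonzero `x`. -/
def NegDefQF {ι : Type*} [Fintype ι] (S : Matrix ι ι ℝ) : Prop :=
  ∀ x : ι → ℝ, x ≠ 0 → x ⬝ᵥ S *ᵥ x < 0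

lemma aux_dot_star_comm {ι : Type*} [Fintype ι] (u v : ι → ℂ) :
    star u ⬝ᵥ v = starRingEnd ℂ (star v ⬝ᵥ u) := by
  simp only [dotProduct, map_sum, Pi.star_apply, RingHom.map_mul, RingHomCompTriple.comp_apply,
    Complex.star_def, Complex.conj_conj]
  exact Finset.sum_congr rfl fun i _ => mul_comm _ _

lemma aux_negdef_complex {ι : Type*} [Fintype ι] {S : Matrix ι ι ℝ} (hS : NegDefQF S)
    (z : ι → ℂ) (hz : z ≠ 0) :
    (star z ⬝ᵥ (S.map Complex.ofReal) *ᵥ z).re < 0 := by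
  have hle : ∀ x : ι → ℝ, x ⬝ᵥ S *ᵥ x ≤ 0 := by
    intro x
    by_cases h : x = 0
    · simp [h]
    · exact (hS x h).le
  set a : ι → ℝ := fun i => (z i).re with ha
  set b : ι → ℝ := fun i => (z i).im with hb
  have key : (star z ⬝ᵥ (S.map Complex.ofReal) *ᵥ z).re
      = a ⬝ᵥ S *ᵥ a + b ⬝ᵥ S *ᵥ b := by
    simp only [dotProduct, mulVec, Matrix.map_apply, Pi.star_apply, Complex.star_def,
      Finset.mul_sum, Complex.re_sum, ← Finset.sum_add_distrib]
    refine Finset.sum_congr rfl fun i _ => Finset.sum_congr rfl fun j _ => ?_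
    simp only [Complex.mul_re, Complex.mul_im, Complex.conj_re, Complex.conj_im,
      Complex.ofReal_re, Complex.ofReal_im, ha, hb]
    ring
  rw [key]
  have hab : a ≠ 0 ∨ b ≠ 0 := by
    by_contra h
    push_neg at h
    apply hz
    funext i
    have h1 := congrFun h.1 i
    have h2 := congrFun h.2 i
    simp only [ha, hb, Pi.zero_apply] at h1 h2
    exact Complex.ext h1 h2
  rcases hab with h | h
  · simpa using add_lt_add_of_lt_of_le (hS a h) (hle b)
  · simpa using add_lt_add_of_le_of_lt (hle a) (hS b h)

lemma aux_opnorm_lt {q r : ℕ} (G : Matrix (Fin r) (Fin q) ℂ) (lb : ℝ) (hlb : 0 < lb)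
    (h : ∀ w : Fin q → ℂ, w ≠ 0 →
      (star (G *ᵥ w) ⬝ᵥ (G *ᵥ w)).re < lb ^ 2 * (star w ⬝ᵥ w).re) :
    l2OpNormC G < lb := by
  set f := LinearMap.toContinuousLinearMap (Matrix.toEuclideanLin G) with hf
  have hsq : ∀ v : EuclideanSpace ℂ (Fin q),
      ‖v‖ ^ 2 = (star ((WithLp.equiv 2 (Fin q → ℂ)) v) ⬝ᵥ ((WithLp.equiv 2 (Fin q → ℂ)) v)).re := by
    intro v
    rw [← inner_self_eq_norm_sq (𝕜 := ℂ), EuclideanSpace.inner_eq_star_dotProduct]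
    simp
    rw [dotProduct_comm]
  have hsqf : ∀ v : EuclideanSpace ℂ (Fin r),
      ‖v‖ ^ 2 = (star ((WithLp.equiv 2 (Fin r → ℂ)) v) ⬝ᵥ ((WithLp.equiv 2 (Fin r → ℂ)) v)).re := by
    intro v
    rw [← inner_self_eq_norm_sq (𝕜 := ℂ), EuclideanSpace.inner_eq_star_dotProduct]
    simp
    rw [dotProduct_comm]
  have key : ∀ v : EuclideanSpace ℂ (Fin q), v ≠ 0 → ‖f v‖ < lb * ‖v‖ := by
    intro v hv
    have hw : (WithLp.equiv 2 (Fin q → ℂ)) v ≠ 0 := by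
      intro hc
      exact hv ((WithLp.equiv 2 (Fin q → ℂ)).injective (by simpa using hc))
    have h1 : ‖f v‖ ^ 2 = (star (G *ᵥ (WithLp.equiv 2 (Fin q → ℂ)) v)
        ⬝ᵥ (G *ᵥ (WithLp.equiv 2 (Fin q → ℂ)) v)).re := by
      rw [hsqf (f v)]
      congr 2
    have h2 : ‖f v‖ ^ 2 < (lb * ‖v‖) ^ 2 := by
      rw [h1, mul_pow, hsq v]
      exact h (WithLp.equiv 2 (Fin q → ℂ) v) hw
    exact lt_of_pow_lt_pow_left₀ 2 (by positivity) h2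
  have hrfl : l2OpNormC G = ‖f‖ := rfl
  rw [hrfl]
  rcases subsingleton_or_nontrivial (EuclideanSpace ℂ (Fin q)) with hs | hs
  · have : f = 0 := by
      ext v
      rw [Subsingleton.elim v 0]
      simp
    rw [this]
    simpa using hlb
  · have hsph : (Metric.sphere (0 : EuclideanSpace ℂ (Fin q)) 1).Nonempty :=
      NormedSpace.sphere_nonempty.mpr zero_le_one
    obtain ⟨v₀, hv₀, hmax⟩ := (isCompact_sphere (0 : EuclideanSpace ℂ (Fin q)) 1).exists_isMaxOn
      hsph ((continuous_norm.comp f.continuous).continuousOn)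
    have hv₀1 : ‖v₀‖ = 1 := by simpa using hv₀
    have hv₀0 : v₀ ≠ 0 := by
      intro hc; rw [hc] at hv₀1; simp at hv₀1
    have hc : ‖f v₀‖ < lb := by simpa [hv₀1] using key v₀ hv₀0
    have hb : ‖f‖ ≤ ‖f v₀‖ := by
      apply ContinuousLinearMap.opNorm_le_bound _ (norm_nonneg _)
      intro x
      by_cases hx : x = 0
      · simp [hx]
      · have hxn : ‖x‖ ≠ 0 := norm_ne_zero_iff.mpr hx
        have hxs : (‖x‖⁻¹ • x) ∈ Metric.sphere (0 : EuclideanSpace ℂ (Fin q)) 1 := by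
          simp [norm_smul, inv_mul_cancel₀ hxn]
        have hm := hmax hxs
        simp only [Set.mem_setOf_eq, _root_.map_smul, norm_smul, norm_inv, norm_norm] at hm
        calc ‖f x‖ = ‖x‖ * (‖x‖⁻¹ * ‖f x‖) := by field_simp
        _ ≤ ‖x‖ * ‖f v₀‖ := by
            apply mul_le_mul_of_nonneg_left _ (norm_nonneg x)
            simpa [norm_smul] using hm
        _ = ‖f v₀‖ * ‖x‖ := mul_comm _ _
    exact lt_of_le_of_lt hb hc

lemma aux_dot_conjT_mulVec {ι κ : Type*} [Fintype ι] [Fintype κ]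
    (A : Matrix ι κ ℂ) (x : κ → ℂ) (v : ι → ℂ) :
    star x ⬝ᵥ (Aᴴ *ᵥ v) = star (A *ᵥ x) ⬝ᵥ v := by
  rw [Matrix.star_mulVec, Matrix.dotProduct_mulVec]

lemma aux_mapC_mul {a b c : Type*} [Fintype a] [Fintype b] [Fintype c]
    (A : Matrix a b ℝ) (B : Matrix b c ℝ) :
    (A * B).map Complex.ofReal = A.map Complex.ofReal * B.map Complex.ofReal := by
  ext i j
  simp [Matrix.mul_apply, Matrix.map_apply]

lemma aux_mapC_CT {a b : Type*} (A : Matrix a b ℝ) :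
    (A.map Complex.ofReal)ᴴ = Aᵀ.map Complex.ofReal := by
  ext i j
  simp [Matrix.conjTranspose_apply, Matrix.map_apply, Complex.conj_ofReal]

/-- Proposition 2 (Finite H∞-norm), stated in the frequency domain. -/
theorem stmt7 {n m d p : ℕ}
    (Aa : Matrix (Fin n) (Fin n) ℝ) (Ca : Matrix (Fin m) (Fin n) ℝ)
    (Da : Matrix (Fin n) (Fin d) ℝ) (Cb : Matrix (Fin p) (Fin n) ℝ)
    (P : Matrix (Fin n) (Fin n) ℝ) (hP : P.PosDef)
    (R Q : Matrix (Fin n) (Fin m) ℝ) (lb : ℝ) (hlb : 0 < lb)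
    (X : Matrix (Fin n) (Fin n) ℝ)
    (hX : X = Aaᵀ * P + Aaᵀ * Caᵀ * Rᵀ - Caᵀ * Qᵀ + P * Aa + R * Ca * Aa - Q * Ca)
    (hLMI : NegDefQF (fromBlocks X
        (fromCols (-((P + R * Ca) * Da)) Cbᵀ)
        (fromRows (-(Daᵀ * (P + R * Ca)ᵀ)) Cb)
        (fromBlocks (-(lb • 1)) 0 0 (-(lb • (1 : Matrix (Fin p) (Fin p) ℝ))))))
    (E K : Matrix (Fin n) (Fin m) ℝ) (M N : Matrix (Fin n) (Fin n) ℝ)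
    (hE : E = P⁻¹ * R) (hK : K = P⁻¹ * Q)
    (hM : M = 1 + E * Ca) (hN : N = M * Aa - K * Ca) :
    ∀ μ : ℝ,
      IsUnit ((Complex.I * (μ : ℂ)) • (1 : Matrix (Fin n) (Fin n) ℂ) -
          N.map Complex.ofReal) ∧
      l2OpNormC (Cb.map Complex.ofReal *
          ((Complex.I * (μ : ℂ)) • (1 : Matrix (Fin n) (Fin n) ℂ) -
            N.map Complex.ofReal)⁻¹ *
          (M.map Complex.ofReal * Da.map Complex.ofReal)) < lb := by
  have hPdet : IsUnit P.det := isUnit_iff_ne_zero.mpr hP.det_pos.ne'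
  have hPsym : Pᵀ = P := by
    have h : Pᴴ = P := hP.isHermitian
    rwa [Matrix.conjTranspose_eq_transpose_of_trivial] at h
  have hPE : P * E = R := by rw [hE, ← Matrix.mul_assoc, Matrix.mul_nonsing_inv P hPdet, Matrix.one_mul]
  have hPK : P * K = Q := by rw [hK, ← Matrix.mul_assoc, Matrix.mul_nonsing_inv P hPdet, Matrix.one_mul]
  have hPM : P * M = P + R * Ca := by rw [hM, Matrix.mul_add, Matrix.mul_one, ← Matrix.mul_assoc, hPE]
  have hPN : P * N = (P + R * Ca) * Aa - Q * Ca := by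
    rw [hN, Matrix.mul_sub, ← Matrix.mul_assoc, hPM, ← Matrix.mul_assoc, hPK]
  have hXid : X = Nᵀ * P + P * N := by
    have h1 : Nᵀ * P = (P * N)ᵀ := by rw [Matrix.transpose_mul, hPsym]
    rw [hX, h1, hPN]
    simp only [Matrix.transpose_sub, Matrix.transpose_mul, Matrix.transpose_add, hPsym,
      Matrix.mul_add, Matrix.add_mul, Matrix.sub_mul, Matrix.mul_assoc]
    abel
  have hPMD : P * (M * Da) = (P + R * Ca) * Da := by rw [← Matrix.mul_assoc, hPM]
  intro μ
  set c : ℂ := Complex.I * (μ : ℂ) with hc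
  have hcstar : star c = -c := by
    simp [hc, Complex.star_def, _root_.map_mul, Complex.conj_I, Complex.conj_ofReal]
  set Nc := N.map Complex.ofReal with hNcdef
  set Pc := P.map Complex.ofReal with hPcdef
  set Cbc := Cb.map Complex.ofReal with hCbcdef
  set Bc := M.map Complex.ofReal * Da.map Complex.ofReal with hBcdef
  set Fc := ((P + R * Ca) * Da).map Complex.ofReal with hFcdef
  set A0 := c • (1 : Matrix (Fin n) (Fin n) ℂ) - Nc with hA0def
  have hPcBc : Pc * Bc = Fc := by
    rw [hPcdef, hBcdef, hFcdef, ← aux_mapC_mul M Da, ← aux_mapC_mul P (M * Da), hPMD]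
  have hPcH : Pcᴴ = Pc := by rw [hPcdef, aux_mapC_CT, hPsym]
  have hCbH : Cbcᴴ = Cbcᵀ := by rw [hCbcdef, aux_mapC_CT, Matrix.transpose_map]
  have hFH : Fcᴴ = Fcᵀ := by rw [hFcdef, aux_mapC_CT, Matrix.transpose_map]
  have hXc : X.map Complex.ofReal = Ncᴴ * Pc + Pc * Nc := by
    have : (Nᵀ * P + P * N).map Complex.ofReal
        = Nᵀ.map Complex.ofReal * Pc + Pc * Nc := by
      ext i j
      simp [Matrix.map_apply, Matrix.add_apply, Matrix.mul_apply, hPcdef, hNcdef]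
    rw [hXid, this, hNcdef, aux_mapC_CT]
  -- the key quadratic identity for the X block
  have hXquad : ∀ (x : Fin n → ℂ) (v : Fin d → ℂ), Nc *ᵥ x = c • x + Bc *ᵥ v →
      star x ⬝ᵥ (X.map Complex.ofReal) *ᵥ x
        = star x ⬝ᵥ (Fc *ᵥ v) + (starRingEnd ℂ) (star x ⬝ᵥ (Fc *ᵥ v)) := by
    intro x v hNx
    have h1 : star x ⬝ᵥ ((Pc * Nc) *ᵥ x)
        = c * (star x ⬝ᵥ (Pc *ᵥ x)) + star x ⬝ᵥ (Fc *ᵥ v) := by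
      rw [← Matrix.mulVec_mulVec, hNx, Matrix.mulVec_add, Matrix.mulVec_smul,
        dotProduct_add, dotProduct_smul, Matrix.mulVec_mulVec, hPcBc,
        smul_eq_mul]
    have h2 : star x ⬝ᵥ ((Ncᴴ * Pc) *ᵥ x)
        = -c * (star x ⬝ᵥ (Pc *ᵥ x)) + (starRingEnd ℂ) (star x ⬝ᵥ (Fc *ᵥ v)) := by
      rw [← Matrix.mulVec_mulVec, aux_dot_conjT_mulVec, hNx, star_add, star_smul,
        add_dotProduct, smul_dotProduct, hcstar, smul_eq_mul]
      congr 1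
      rw [aux_dot_star_comm]
      congr 1
      rw [← aux_dot_conjT_mulVec Pc x (Bc *ᵥ v), hPcH, Matrix.mulVec_mulVec, hPcBc]
    rw [hXc, Matrix.add_mulVec, dotProduct_add, h1, h2]
    ring
  -- Part 1: invertibility
  have hIsUnit : IsUnit A0 := by
    by_contra hni
    rw [Matrix.isUnit_iff_isUnit_det, isUnit_iff_ne_zero, not_not] at hni
    obtain ⟨x, hx0, hx⟩ := Matrix.exists_mulVec_eq_zero_iff.mpr hni
    have hNx : Nc *ᵥ x = c • x + Bc *ᵥ (0 : Fin d → ℂ) := by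
      rw [hA0def, Matrix.sub_mulVec, Matrix.smul_mulVec, Matrix.one_mulVec,
        sub_eq_zero] at hx
      rw [Matrix.mulVec_zero, add_zero, ← hx]
    have hq := hXquad x 0 hNx
    rw [Matrix.mulVec_zero, dotProduct_zero, map_zero, add_zero] at hq
    have hz0 : (Sum.elim x (0 : Fin d ⊕ Fin p → ℂ)) ≠ 0 := by
      intro hzz
      exact hx0 (funext fun i => by simpa using congrFun hzz (Sum.inl i))
    have hlt := aux_negdef_complex hLMI (Sum.elim x 0) hz0
    rw [Matrix.fromBlocks_map, Function.star_sumElim, Matrix.fromBlocks_mulVec,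
      sumElim_dotProduct_sumElim] at hlt
    simp only [Sum.elim_comp_inl, Sum.elim_comp_inr, Matrix.mulVec_zero, add_zero, star_zero,
      zero_dotProduct, hq] at hlt
    simp at hlt
  refine ⟨hIsUnit, ?_⟩
  have hA0detUnit : IsUnit A0.det := (Matrix.isUnit_iff_isUnit_det A0).mp hIsUnit
  apply aux_opnorm_lt _ lb hlb
  intro w hw
  set x : Fin n → ℂ := -(A0⁻¹ *ᵥ (Bc *ᵥ w)) with hxdef
  set u : Fin p → ℂ := Cbc *ᵥ x with hudef
  set y : Fin p → ℂ := ((lb : ℂ))⁻¹ • u with hydef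
  have hlbc : (lb : ℂ) ≠ 0 := by
    simpa using Complex.ofReal_ne_zero.mpr hlb.ne'
  have hGw : (Cbc * A0⁻¹ * Bc) *ᵥ w = -u := by
    simp only [hudef, hxdef, Matrix.mulVec_neg, neg_neg, Matrix.mulVec_mulVec, ← Matrix.mul_assoc]
  have hA0x : A0 *ᵥ x = -(Bc *ᵥ w) := by
    rw [hxdef, Matrix.mulVec_neg, Matrix.mulVec_mulVec, Matrix.mul_nonsing_inv A0 hA0detUnit,
      Matrix.one_mulVec]
  have hNx : Nc *ᵥ x = c • x + Bc *ᵥ w := by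
    rw [hA0def, Matrix.sub_mulVec, Matrix.smul_mulVec, Matrix.one_mulVec] at hA0x
    have h3 : Nc *ᵥ x = c • x - (c • x - Nc *ᵥ x) := by abel
    rw [h3, hA0x, sub_neg_eq_add]
  set a : ℂ := star x ⬝ᵥ (Fc *ᵥ w) with hadef
  set s : ℂ := star u ⬝ᵥ u with hsdef
  set t : ℂ := star w ⬝ᵥ w with htdef
  have p1 := hXquad x w hNx
  have hB1c : (fromCols (-((P + R * Ca) * Da)) Cbᵀ).map Complex.ofReal
      = fromCols (-Fc) Cbcᵀ := by
    ext i j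
    cases j <;> simp [Matrix.fromCols, Matrix.map_apply, hFcdef, hCbcdef]
  have hC1c : (fromRows (-(Daᵀ * (P + R * Ca)ᵀ)) Cb).map Complex.ofReal
      = fromRows (-(Fcᵀ)) Cbc := by
    have hD : Daᵀ * (P + R * Ca)ᵀ = ((P + R * Ca) * Da)ᵀ := (Matrix.transpose_mul _ _).symm
    rw [hD]
    ext i j
    cases i <;>
      simp only [Matrix.fromRows_apply_inl, Matrix.fromRows_apply_inr, Matrix.map_apply, Matrix.of_apply, Sum.elim_inl, Sum.elim_inr,
        Matrix.neg_apply, Matrix.transpose_apply, Complex.ofReal_neg, hFcdef, hCbcdef]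
  have hD1c : (fromBlocks (-(lb • 1)) 0 0
        (-(lb • (1 : Matrix (Fin p) (Fin p) ℝ)))).map Complex.ofReal
      = fromBlocks (-((lb : ℂ) • (1 : Matrix (Fin d) (Fin d) ℂ))) 0 0 (-((lb : ℂ) • (1 : Matrix (Fin p) (Fin p) ℂ))) := by
    ext i j
    cases i <;> cases j <;>
      simp [Matrix.fromBlocks, Matrix.map_apply, Matrix.one_apply, Matrix.smul_apply,
        apply_ite Complex.ofReal]
  have p2 : star x ⬝ᵥ ((fromCols (-Fc) Cbcᵀ) *ᵥ Sum.elim w y)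
      = -a + (lb : ℂ)⁻¹ * s := by
    rw [Matrix.fromCols_mulVec_sumElim, dotProduct_add, Matrix.neg_mulVec,
      dotProduct_neg, ← hadef]
    congr 1
    rw [← hCbH, aux_dot_conjT_mulVec, ← hudef, hydef, dotProduct_smul, smul_eq_mul,
      hsdef]
  have p3 : star (Sum.elim w y) ⬝ᵥ ((fromRows (-(Fcᵀ)) Cbc) *ᵥ x)
      = -((starRingEnd ℂ) a) + (lb : ℂ)⁻¹ * s := by
    rw [Matrix.fromRows_mulVec, Function.star_sumElim, sumElim_dotProduct_sumElim]
    congr 1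
    · rw [Matrix.neg_mulVec, dotProduct_neg]
      congr 1
      rw [← hFH, aux_dot_conjT_mulVec, aux_dot_star_comm, ← hadef]
    · rw [← hudef, hydef, star_smul, smul_dotProduct, smul_eq_mul, hsdef]
      congr 1
      simp [Complex.star_def, Complex.conj_ofReal]
  have p4 : star (Sum.elim w y) ⬝ᵥ
        ((fromBlocks (-((lb : ℂ) • (1 : Matrix (Fin d) (Fin d) ℂ))) 0 0 (-((lb : ℂ) • (1 : Matrix (Fin p) (Fin p) ℂ)))) *ᵥ Sum.elim w y)
      = -((lb : ℂ) * t) - (lb : ℂ)⁻¹ * s := by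
    rw [Matrix.fromBlocks_mulVec, Function.star_sumElim, sumElim_dotProduct_sumElim]
    simp only [Sum.elim_comp_inl, Sum.elim_comp_inr]
    have e1 : (-((lb : ℂ) • (1 : Matrix (Fin d) (Fin d) ℂ))) *ᵥ w + (0 : Matrix (Fin d) (Fin p) ℂ) *ᵥ y
        = -((lb : ℂ) • w) := by
      simp [Matrix.neg_mulVec, Matrix.smul_mulVec, Matrix.one_mulVec]
    have e2 : (0 : Matrix (Fin p) (Fin d) ℂ) *ᵥ w + (-((lb : ℂ) • (1 : Matrix (Fin p) (Fin p) ℂ))) *ᵥ y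
        = -((lb : ℂ) • y) := by
      simp [Matrix.neg_mulVec, Matrix.smul_mulVec, Matrix.one_mulVec]
    rw [e1, e2, dotProduct_neg, dotProduct_neg, dotProduct_smul,
      dotProduct_smul, ← htdef, hydef, star_smul, smul_dotProduct,
      dotProduct_smul, ← hsdef]
    have : (starRingEnd ℂ) ((lb : ℂ)⁻¹) = (lb : ℂ)⁻¹ := by
      simp [Complex.conj_ofReal]
    simp only [smul_eq_mul, Complex.star_def, this]
    field_simp
    ring
  have hz0 : (Sum.elim x (Sum.elim w y)) ≠ 0 := by
    intro hzz
    exact hw (funext fun j => by simpa using congrFun hzz (Sum.inr (Sum.inl j)))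
  have hlt := aux_negdef_complex hLMI (Sum.elim x (Sum.elim w y)) hz0
  rw [Matrix.fromBlocks_map, hB1c, hC1c, hD1c, Function.star_sumElim,
    Matrix.fromBlocks_mulVec, sumElim_dotProduct_sumElim] at hlt
  simp only [Sum.elim_comp_inl, Sum.elim_comp_inr] at hlt
  rw [dotProduct_add, dotProduct_add, p1, p2, p3, p4] at hlt
  have hQre : ((a + (starRingEnd ℂ) a) + (-a + (lb : ℂ)⁻¹ * s)
      + ((-((starRingEnd ℂ) a) + (lb : ℂ)⁻¹ * s) + (-((lb : ℂ) * t) - (lb : ℂ)⁻¹ * s)))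
      = (lb : ℂ)⁻¹ * s - (lb : ℂ) * t := by ring
  rw [hQre] at hlt
  have hre : ((lb : ℂ)⁻¹ * s - (lb : ℂ) * t).re = lb⁻¹ * s.re - lb * t.re := by
    rw [Complex.sub_re, ← Complex.ofReal_inv, Complex.re_ofReal_mul, Complex.re_ofReal_mul]
  rw [hre] at hlt
  have hsre : (star ((Cbc * A0⁻¹ * Bc) *ᵥ w) ⬝ᵥ ((Cbc * A0⁻¹ * Bc) *ᵥ w)).re = s.re := by
    rw [hGw]
    simp [neg_dotProduct, dotProduct_neg, hsdef]
  rw [hsre]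
  have h5 : lb⁻¹ * s.re < lb * t.re := by linarith
  have h6 : lb * (lb⁻¹ * s.re) < lb * (lb * t.re) := (mul_lt_mul_iff_right₀ hlb).mpr h5
  rw [← mul_assoc, mul_inv_cancel₀ hlb.ne', one_mul] at h6
  calc s.re < lb * (lb * t.re) := h6
  _ = lb ^ 2 * t.re := by ring
end
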